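/- Let A, B be n×n complex matrices and let C = A + B. Then the number of eigenvalues of C that are not eigenvalues of A satisfies |Λ(C) \ Λ(A)| ≤ rank(B)·|Λ(A)| + d(A). -/

import Mathlib

open Matrix Polynomial Module

/-- The set of distinct eigenvalues of a matrix: the roots of its characteristic polynomial. -/
noncomputable def eigSet {n : ℕ} (M : Matrix (Fin n) (Fin n) ℂ) : Finset ℂ :=
  M.charpoly.roots.toFinset

/-- Algebraic multiplicity of `μ` as an eigenvalue of `M` (multiplicity as a root of the
characteristic polynomial; `0` if `μ` is not an eigenvalue). -/
noncomputable def algMult {n : ℕ} (M : Matrix (Fin n) (Fin n) ℂ) (μ : ℂ) : ℕ :=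
  M.charpoly.rootMultiplicity μ

/-- Geometric multiplicity of `μ` as an eigenvalue of `M`: the dimension of `ker (M - μ I)`. -/
noncomputable def geomMult {n : ℕ} (M : Matrix (Fin n) (Fin n) ℂ) (μ : ℂ) : ℕ :=
  Module.finrank ℂ (LinearMap.ker (M - μ • (1 : Matrix (Fin n) (Fin n) ℂ)).mulVecLin)

/-- The defectivity of a matrix: the sum over its distinct eigenvalues of the differences
between algebraic and geometric multiplicities. -/
noncomputable def defect {n : ℕ} (M : Matrix (Fin n) (Fin n) ℂ) : ℕ :=
  ∑ μ ∈ eigSet M, (algMult M μ - geomMult M μ)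

/-- A matrix is diagonalizable if it is similar to a diagonal matrix. -/
def IsDiagonalizable {n : ℕ} (M : Matrix (Fin n) (Fin n) ℂ) : Prop :=
  ∃ P D : Matrix (Fin n) (Fin n) ℂ, IsUnit P ∧ D.IsDiag ∧ M = P * D * P⁻¹

/-!
A vector in both `ker (A - μ)` and `ker B` is a `μ`-eigenvector of `A + B`, so, by dimension
counting, the geometric multiplicity of `μ` for `A` exceeds its algebraic multiplicity for
`A + B` by at most `rank B`. Summing over `Λ(A)`, the eigenvalues of `A` absorb all but at most
`rank B · |Λ(A)| + d(A)` of the `n` roots of the characteristic polynomial of `A + B`, and each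
new eigenvalue of `A + B` uses up at least one of the remaining roots.
-/

namespace Module.End

variable {K V : Type*} [Field K] [AddCommGroup V] [Module K V] [FiniteDimensional K V]

theorem finrank_eigenspace_le_rootMultiplicity_add_finrank_range (f g : End K V) (μ : K) :
    finrank K (f.eigenspace μ) ≤
      (f + g).charpoly.rootMultiplicity μ + finrank K (LinearMap.range g) := by
  set E := f.eigenspace μ
  have hE : E ⊓ LinearMap.ker g ≤ (f + g).eigenspace μ := fun x hx => by
    obtain ⟨hf, hg⟩ := Submodule.mem_inf.mp hx
    rw [mem_eigenspace_iff] at hf ⊢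
    rw [LinearMap.add_apply, hf, LinearMap.mem_ker.mp hg, add_zero]
  have hinf : finrank K ↥(E ⊓ LinearMap.ker g) ≤ (f + g).charpoly.rootMultiplicity μ :=
    (Submodule.finrank_mono hE).trans (LinearMap.finrank_eigenspace_le _ μ)
  have hsup := Submodule.finrank_sup_add_finrank_inf_eq E (LinearMap.ker g)
  have hV := Submodule.finrank_le (E ⊔ LinearMap.ker g)
  have hrank := LinearMap.finrank_range_add_finrank_ker g
  omega

end Module.End

section

variable {n : ℕ}

theorem geomMult_eq_finrank_eigenspace (M : Matrix (Fin n) (Fin n) ℂ) (μ : ℂ) :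
    geomMult M μ = finrank ℂ (End.eigenspace M.mulVecLin μ) := by
  have hlin : (M - μ • 1).mulVecLin = M.mulVecLin - μ • 1 := by
    refine LinearMap.ext fun x => ?_
    simp
  rw [geomMult, End.eigenspace_def, hlin]

theorem algMult_eq_rootMultiplicity_mulVecLin (M : Matrix (Fin n) (Fin n) ℂ) (μ : ℂ) :
    algMult M μ = M.mulVecLin.charpoly.rootMultiplicity μ := by
  rw [Matrix.charpoly_mulVecLin, algMult]

theorem algMult_pos_iff {M : Matrix (Fin n) (Fin n) ℂ} {μ : ℂ} :
    0 < algMult M μ ↔ μ ∈ eigSet M := by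
  rw [algMult, rootMultiplicity_pos M.charpoly_monic.ne_zero, eigSet, Multiset.mem_toFinset,
    mem_roots M.charpoly_monic.ne_zero]

theorem sum_algMult_eigSet (M : Matrix (Fin n) (Fin n) ℂ) :
    ∑ μ ∈ eigSet M, algMult M μ = n := by
  have hroots : Multiset.card M.charpoly.roots = n := by
    have := splits_iff_card_roots.mp (IsAlgClosed.splits M.charpoly)
    rwa [charpoly_natDegree_eq_dim, Fintype.card_fin] at this
  calc ∑ μ ∈ eigSet M, algMult M μ
      = ∑ μ ∈ M.charpoly.roots.toFinset, M.charpoly.roots.count μ :=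
        Finset.sum_congr rfl fun μ _ => (count_roots M.charpoly).symm
    _ = n := by rw [Multiset.toFinset_sum_count_eq, hroots]

theorem card_eigSet_sdiff_add_sum_algMult_le (M : Matrix (Fin n) (Fin n) ℂ) (s : Finset ℂ) :
    (eigSet M \ s).card + ∑ μ ∈ s, algMult M μ ≤ n := by
  have hcard : (eigSet M \ s).card ≤ ∑ μ ∈ eigSet M \ s, algMult M μ :=
    (Finset.card_eq_sum_ones _).trans_le <|
      Finset.sum_le_sum fun μ hμ => algMult_pos_iff.mpr (Finset.mem_sdiff.mp hμ).1
  have hs : ∑ μ ∈ eigSet M ∩ s, algMult M μ = ∑ μ ∈ s, algMult M μ :=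
    Finset.sum_subset Finset.inter_subset_right fun μ hμs hμ =>
      Nat.eq_zero_of_not_pos fun hpos => hμ (Finset.mem_inter.mpr ⟨algMult_pos_iff.mp hpos, hμs⟩)
  calc (eigSet M \ s).card + ∑ μ ∈ s, algMult M μ
      ≤ ∑ μ ∈ eigSet M ∩ s, algMult M μ + ∑ μ ∈ eigSet M \ s, algMult M μ := by
        rw [hs, add_comm]; exact Nat.add_le_add_left hcard _
    _ = n := by rw [Finset.sum_inter_add_sum_sdiff, sum_algMult_eigSet]

theorem geomMult_le_algMult_add_add_rank (A B : Matrix (Fin n) (Fin n) ℂ) (μ : ℂ) :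
    geomMult A μ ≤ algMult (A + B) μ + B.rank := by
  rw [geomMult_eq_finrank_eigenspace, algMult_eq_rootMultiplicity_mulVecLin, mulVecLin_add]
  exact End.finrank_eigenspace_le_rootMultiplicity_add_finrank_range _ _ μ

theorem le_sum_algMult_add_add_rank_mul_card_eigSet_add_defect (A B : Matrix (Fin n) (Fin n) ℂ) :
    n ≤ ∑ μ ∈ eigSet A, algMult (A + B) μ + B.rank * (eigSet A).card + defect A := by
  calc n = ∑ μ ∈ eigSet A, algMult A μ := (sum_algMult_eigSet A).symm
    _ ≤ ∑ μ ∈ eigSet A, (algMult (A + B) μ + B.rank + (algMult A μ - geomMult A μ)) :=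
        Finset.sum_le_sum fun μ _ => by
          have := geomMult_le_algMult_add_add_rank A B μ
          omega
    _ = ∑ μ ∈ eigSet A, algMult (A + B) μ + B.rank * (eigSet A).card + defect A := by
        rw [Finset.sum_add_distrib, Finset.sum_add_distrib, Finset.sum_const, smul_eq_mul,
          mul_comm, defect]

end

/-- the number of new eigenvalues introduced by the perturbation is at most
`rank(B)·|Λ(A)| + d(A)`. -/
theorem card_new_eigenvalues_le {n : ℕ}
    (A B C : Matrix (Fin n) (Fin n) ℂ) (hC : C = A + B) :
    (eigSet C \ eigSet A).card ≤ B.rank * (eigSet A).card + defect A := by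
  subst hC
  have hnew := card_eigSet_sdiff_add_sum_algMult_le (A + B) (eigSet A)
  have hold := le_sum_algMult_add_add_rank_mul_card_eigSet_add_defect A B
  omega
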